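/- Each entry of the matrix M_Φ of the map Φ(v_0 ⊗ u) = Σ_{k=0}^{m} (-1)^k q^{2km - k(k+1)} s^{-k(n-1)} v_k ⊗ E^k u, expressed in the rescaled bases {v_{i(e)}} of V'_{n,m} and {v_e} of V_{n,m}, lies in ℤ[q, q^{-1}], i.e. involves no positive or negative power of s. -/

import Mathlib

/-!
Grade `ℤ[q^{±1}][s^{±1}]` by the degree in `s`. Applying `E` at position `i` lowers `f_i` by one,
so the rescaling exponent `Σ_t (t + a) f_t` drops by `i + a`, while the `K`-factors to the right
of position `i` contribute `s^{n-1-i}`. Hence, measured against the rescaled basis, `E` raises the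
`s`-degree by `n - 1 + a` whatever `i` is. In the `k`-th term of `Φ` the gain `k(n + 1)` of `E^k`
and the loss `k` from prepending `v_k` are cancelled exactly by `s^{-kn}`.
-/

open Finset LaurentPolynomial

noncomputable section

/-- The ring `ℤ[q^{±1}][s^{±1}]`: Laurent polynomials in `s` over `ℤ[q^{±1}]`. -/
abbrev LQS : Type := LaurentPolynomial (LaurentPolynomial ℤ)

/-- The variable `s`. -/
def Sv : LQS := T 1

/-- The power `q^z`, as an element of `ℤ[q^{±1}][s^{±1}]`. -/
def Qp (z : ℤ) : LQS := LaurentPolynomial.C (T z)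

/-- The `n`-fold tensor power `V^{⊗n}` of the generic Verma module, modelled as the free
`ℤ[q^{±1},s^{±1}]`-module on basis vectors `v_{e_1} ⊗ ⋯ ⊗ v_{e_n}` indexed by tuples
`e : Fin n → ℕ`. -/
abbrev TensorV (n : ℕ) : Type := (Fin n → ℕ) →₀ LQS

/-- The action of `E` on `V^{⊗n}` through the iterated coproduct
`Δ^{(n)}(E) = Σ_{i=1}^{n} 1^{⊗(i-1)} ⊗ E ⊗ K^{⊗(n-i)}`, where on each single factor
`E v_j = v_{j-1}` (`E v_0 = 0`) and `K v_j = s q^{-2j} v_j`. -/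
def Eact (n : ℕ) (v : TensorV n) : TensorV n :=
  v.sum fun e c =>
    ∑ i ∈ Finset.univ.filter (fun i : Fin n => 1 ≤ e i),
      Finsupp.single (Function.update e i (e i - 1))
        (c * ∏ t ∈ Finset.univ.filter (fun t : Fin n => i < t),
          (Sv * Qp (-2 * (e t : ℤ))))

/-- The map `Φ(v_0 ⊗ u) = Σ_{k=0}^{m} (-1)^k q^{2km - k(k+1)} s^{-k(n-1)} v_k ⊗ E^k u`
from `V'_{n,m} = L v_0 ⊗ V^{⊗(n-1)}` to `V^{⊗n}` (here with `n` replaced by `n+1`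
total tensor factors, so the input has `n` factors and `s`-exponent `-k·n`). -/
def Phi (n m : ℕ) (u : TensorV n) : TensorV (n + 1) :=
  ∑ k ∈ Finset.range (m + 1),
    ((-1 : LQS) ^ k * Qp (2 * (k : ℤ) * m - k * (k + 1)) * T (-(k : ℤ) * n)) •
      Finsupp.mapDomain (fun e => Fin.cons k e) ((Eact n)^[k] u)


section RescaledSpan

open AddMonoidAlgebra

/-- The rescaled basis vector `v_f` is `s^{indexWeight 1 f}` times the plain one, and `v_{i(f)}`
carries `s^{indexWeight 2 f}`, as `f t` sits at the (one-based) position `t + 2` of `i(f)`. -/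
def indexWeight (a : ℤ) (f : Fin n → ℕ) : ℤ := ∑ t : Fin n, (((t : ℕ) : ℤ) + a) * f t

lemma indexWeight_update (a : ℤ) (f : Fin n → ℕ) (i : Fin n) (b : ℕ) :
    indexWeight a (Function.update f i b) = indexWeight a f + ((i : ℕ) + a) * (b - f i) := by
  classical
  simp only [indexWeight,
    Function.apply_update (fun (t : Fin n) (x : ℕ) => (((t : ℕ) : ℤ) + a) * (x : ℤ)),
    Finset.sum_update_of_mem (Finset.mem_univ i),
    Finset.sum_eq_add_sum_sdiff_singleton_of_mem (Finset.mem_univ i)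
      (fun t : Fin n => (((t : ℕ) : ℤ) + a) * (f t : ℤ))]
  ring

lemma indexWeight_cons (a : ℤ) (k : ℕ) (f : Fin n → ℕ) :
    indexWeight a (Fin.cons k f : Fin (n + 1) → ℕ) = a * k + indexWeight (a + 1) f := by
  simp only [indexWeight, Fin.sum_univ_succ, Fin.cons_zero, Fin.cons_succ, Fin.val_zero,
    Fin.val_succ]
  push_cast
  congr 1
  · ring
  · exact Finset.sum_congr rfl fun t _ => by ring

/-- The `ℤ[q^{±1}]`-combinations of the vectors `s^c v_f`, with `v_f` rescaled by
`s^{indexWeight a f}`. -/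
def rescaledSpan (n : ℕ) (a c : ℤ) : Submodule (LaurentPolynomial ℤ) (TensorV n) :=
  (Submodule.pi Set.univ fun f => grade (LaurentPolynomial ℤ) (indexWeight a f + c)).comap
    (Finsupp.lcoeFun (R := LaurentPolynomial ℤ))

lemma mem_rescaledSpan {a c : ℤ} {v : TensorV n} :
    v ∈ rescaledSpan n a c ↔ ∀ f, v f ∈ grade (LaurentPolynomial ℤ) (indexWeight a f + c) := by
  simp [rescaledSpan]

lemma single_mem_rescaledSpan {a c : ℤ} {f : Fin n → ℕ} {x : LQS}
    (hx : x ∈ grade (LaurentPolynomial ℤ) (indexWeight a f + c)) :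
    Finsupp.single f x ∈ rescaledSpan n a c := by
  classical
  refine mem_rescaledSpan.2 fun g => ?_
  rw [Finsupp.single_apply]
  split_ifs with h
  · exact h ▸ hx
  · exact zero_mem _

lemma T_mem_grade (z : ℤ) : (T z : LQS) ∈ grade (LaurentPolynomial ℤ) z :=
  single_mem_grade z 1

lemma Sv_mem_grade_one : Sv ∈ grade (LaurentPolynomial ℤ) 1 :=
  T_mem_grade 1

lemma Qp_mem_grade_zero (z : ℤ) : Qp z ∈ grade (LaurentPolynomial ℤ) 0 :=
  single_mem_grade 0 _

lemma exists_C_mul_T_of_mem_grade {x : LQS} {z : ℤ} (hx : x ∈ grade (LaurentPolynomial ℤ) z) :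
    ∃ p, x = C p * T z := by
  obtain ⟨p, rfl⟩ := (mem_grade_iff' _ _ _).1 hx
  exact ⟨p, single_eq_C_mul_T p z⟩

lemma prod_Sv_mul_Qp_mem_grade {ι : Type*} (S : Finset ι) (z : ι → ℤ) :
    ∏ t ∈ S, (Sv * Qp (z t)) ∈ grade (LaurentPolynomial ℤ) (#S : ℤ) := by
  have h : ∏ t ∈ S, (Sv * Qp (z t)) ∈ grade (LaurentPolynomial ℤ) (∑ _t ∈ S, (1 : ℤ)) :=
    SetLike.prod_mem_graded _ _ _ fun t _ => by
      simpa only [add_zero] using SetLike.mul_mem_graded Sv_mem_grade_one (Qp_mem_grade_zero (z t))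
  simpa using h

lemma smul_mem_rescaledSpan {a c d : ℤ} {r : LQS} {v : TensorV n}
    (hr : r ∈ grade (LaurentPolynomial ℤ) d) (hv : v ∈ rescaledSpan n a c) :
    r • v ∈ rescaledSpan n a (c + d) := by
  refine mem_rescaledSpan.2 fun f => ?_
  rw [Finsupp.smul_apply, smul_eq_mul]
  convert SetLike.mul_mem_graded hr (mem_rescaledSpan.1 hv f) using 2
  ring

lemma mapDomain_cons_mem_rescaledSpan {a c : ℤ} {u : TensorV n}
    (hu : u ∈ rescaledSpan n (a + 1) c) (k : ℕ) :
    Finsupp.mapDomain (fun f => Fin.cons k f) u ∈ rescaledSpan (n + 1) a (c - a * k) :=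
  Submodule.sum_mem _ fun f _ => single_mem_rescaledSpan <| by
    convert mem_rescaledSpan.1 hu f using 2
    rw [indexWeight_cons]
    ring

lemma Eact_mem_rescaledSpan {a c : ℤ} {v : TensorV n} (hv : v ∈ rescaledSpan n a c) :
    Eact n v ∈ rescaledSpan n a (c + (n - 1 + a)) := by
  refine Submodule.sum_mem _ fun e _ => Submodule.sum_mem _ fun i hi => single_mem_rescaledSpan ?_
  have hi : 1 ≤ e i := (Finset.mem_filter.1 hi).2
  convert SetLike.mul_mem_graded (mem_rescaledSpan.1 hv e) (prod_Sv_mul_Qp_mem_grade _ _) using 2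
  rw [Finset.filter_lt_eq_Ioi, Fin.card_Ioi, indexWeight_update]
  have hin := i.isLt
  push_cast [hi, Nat.cast_sub (show (i : ℕ) ≤ n - 1 by omega), Nat.cast_sub (show 1 ≤ n by omega)]
  ring

lemma iterate_Eact_mem_rescaledSpan {a c : ℤ} {v : TensorV n}
    (hv : v ∈ rescaledSpan n a c) (k : ℕ) :
    (Eact n)^[k] v ∈ rescaledSpan n a (c + k * (n - 1 + a)) := by
  induction k with
  | zero => simpa using hv
  | succ k ih =>
    rw [Function.iterate_succ_apply']
    convert Eact_mem_rescaledSpan ih using 2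
    push_cast
    ring

lemma Phi_mem_rescaledSpan {c : ℤ} {u : TensorV n} (hu : u ∈ rescaledSpan n 2 c)
    (m : ℕ) : Phi n m u ∈ rescaledSpan (n + 1) 1 c := by
  refine Submodule.sum_mem _ fun k _ => ?_
  have hsign : (-1 : LQS) ^ k ∈ grade (LaurentPolynomial ℤ) 0 := by
    simpa using SetLike.pow_mem_graded k (neg_mem (T_mem_grade 0))
  have hcoef := SetLike.mul_mem_graded
    (SetLike.mul_mem_graded hsign (Qp_mem_grade_zero (2 * (k : ℤ) * m - k * (k + 1))))
    (T_mem_grade (-(k : ℤ) * n))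
  rw [← one_add_one_eq_two] at hu
  have h := smul_mem_rescaledSpan hcoef
    (mapDomain_cons_mem_rescaledSpan (iterate_Eact_mem_rescaledSpan hu k) k)
  rwa [show c + k * ((n : ℤ) - 1 + (1 + 1)) - 1 * k + (0 + 0 + -(k : ℤ) * n) = c by ring] at h

end RescaledSpan

theorem Phi_matrix_entries_no_s_general (n m : ℕ) (e : Fin n → ℕ)
    (e' : Fin (n + 1) → ℕ) :
    ∃ p : LaurentPolynomial ℤ,
      (Phi n m (Finsupp.single e (T (∑ t : Fin n, (((t : ℕ) : ℤ) + 2) * e t)))) e' =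
        LaurentPolynomial.C p * T (∑ t : Fin (n + 1), (((t : ℕ) : ℤ) + 1) * e' t) := by
  have hu : Finsupp.single e (T (indexWeight 2 e)) ∈ rescaledSpan n 2 0 :=
    single_mem_rescaledSpan (by simpa using T_mem_grade _)
  simpa [indexWeight] using
    exists_C_mul_T_of_mem_grade (mem_rescaledSpan.1 (Phi_mem_rescaledSpan hu m) e')

/-- each entry of the matrix `M_Φ` of `Φ`, expressed with respect to the
rescaled bases `v_{i(e)} = s^{Σ_{t=1}^{n+1} t·(i(e))_t} v_0 ⊗ v_{e_1} ⊗ ⋯ ⊗ v_{e_n}`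
(for `e ∈ E_{n+1,m}`, `i(e) = (0,e)`) of `V'` and `v_{e'} = s^{Σ t·e'_t} v_{e'_1} ⊗ ⋯`
of `V`, lies in `ℤ[q,q^{-1}]`: the coefficient of `Φ(v_{i(e)})` on the rescaled basis
vector `v_{e'}` involves no power of the variable `s`. -/
theorem Phi_matrix_entries_no_s (n m : ℕ) (e : Fin n → ℕ) (he : ∑ t, e t = m)
    (e' : Fin (n + 1) → ℕ) :
    ∃ p : LaurentPolynomial ℤ,
      (Phi n m (Finsupp.single e (T (∑ t : Fin n, (((t : ℕ) : ℤ) + 2) * e t)))) e' =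
        LaurentPolynomial.C p * T (∑ t : Fin (n + 1), (((t : ℕ) : ℤ) + 1) * e' t) :=
  Phi_matrix_entries_no_s_general n m e e'

end
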